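/- Let C_3 be the triangle with vertices {0,1,2}, let P_3 be the path with vertices {a,b,c,d} and edges a–b, b–c, c–d, and let f : P_3 → C_3 be the graph homomorphism with f(a)=0, f(b)=1, f(c)=2, f(d)=0. Then for every digraph D without isolated points, every graph homomorphism χ : P_3 → D ⋆ (P_3, a, d) satisfying f_D ∘ χ = f is equal to φ_{(u,v)} for some edge (u,v) ∈ E(D). -/

import Mathlib

open SimpleGraph

attribute [local instance] Classical.propDecidable

/-- The vertex set of the arrow construction `D ⋆ H`: the disjoint union of `D` and
`E(D) × (V(H) ∖ {a, b})`, where `E(D)` is the set of edges of the digraph `(D, E)` and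
`a`, `b` are the two distinguished vertices of `H`. -/
def starVert (V : Type*) (a b : V) (D : Type*) (E : D → D → Prop) : Type _ :=
  D ⊕ ({p : D × D // E p.1 p.2} × {x : V // x ≠ a ∧ x ≠ b})

/-- For an edge `(u, v)` of the digraph `(D, E)`, the map
`φ_{(u,v)} : V(H) → V(D ⋆ H)` sending `a ↦ u`, `b ↦ v`, and `x ↦ (u, v, x)` otherwise. -/
noncomputable def starPhi {V : Type*} (a b : V) {D : Type*} {E : D → D → Prop}
    (u v : D) (huv : E u v) (x : V) : starVert V a b D E :=
  if hx : x = a then Sum.inl u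
  else if hx' : x = b then Sum.inl v
  else Sum.inr (⟨(u, v), huv⟩, ⟨x, hx, hx'⟩)

/-- The arrow construction `D ⋆ H` for a simple graph `H` with distinguished vertices
`a`, `b` and a digraph `(D, E)`: the edges are exactly the pairs
`(φ_{(u,v)} s, φ_{(u,v)} t)` for `(u, v) ∈ E(D)` and `(s, t) ∈ E(H)`. -/
noncomputable def starGraph {V : Type*} (H : SimpleGraph V) (a b : V)
    (D : Type*) (E : D → D → Prop) : SimpleGraph (starVert V a b D E) :=
  SimpleGraph.fromRel (fun x y => ∃ (u v : D) (huv : E u v) (s t : V),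
    H.Adj s t ∧ starPhi a b u v huv s = x ∧ starPhi a b u v huv t = y)

/-- Given a vertex map `f : V(H) → V(G)` (intended to satisfy `f a = f b`), the map
`f_D : V(D ⋆ H) → V(G)` sending every vertex of `D` to `f a` and `(u, v, y) ↦ f y`. -/
def starMap {V W : Type*} (f : V → W) (a b : V) {D : Type*} {E : D → D → Prop} :
    starVert V a b D E → W :=
  Sum.elim (fun _ => f a) (fun p => f p.2.val)

/-- Given a digraph homomorphism `h : (D₁, E₁) → (D₂, E₂)`, the map
`h ⋆ H : V(D₁ ⋆ H) → V(D₂ ⋆ H)` sending `x ↦ h x` for `x ∈ D₁` and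
`(u, v, w) ↦ (h u, h v, w)`. -/
def starMapHom {V : Type*} (a b : V) {D₁ D₂ : Type*}
    {E₁ : D₁ → D₁ → Prop} {E₂ : D₂ → D₂ → Prop}
    (h : D₁ → D₂) (hh : ∀ u v, E₁ u v → E₂ (h u) (h v)) :
    starVert V a b D₁ E₁ → starVert V a b D₂ E₂ :=
  Sum.elim (fun x => Sum.inl (h x))
    (fun p => Sum.inr (⟨(h p.1.val.1, h p.1.val.2), hh _ _ p.1.prop⟩, p.2))

/-! The condition `f_D ∘ χ = f` puts `χ 0` and `χ 3` in `D`, since `f` vanishes only at the ends,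
and puts `χ 1`, `χ 2` at the gadget vertices `(e, 1)`, `(e', 2)`, since `f` is injective on the
inner vertices. Adjacent gadget vertices lie in one gadget, so `e = e'`. A vertex of `D` adjacent
to `(e, 1)` is glued to `0` or `3` in the gadget of `e`, and as `1 ≁ 3` it is the tail of `e`;
symmetrically `χ 3` is its head. -/

section StarGraph

variable {V : Type*} {a b : V} {D : Type*} {E : D → D → Prop} {u v : D} {huv : E u v}

theorem starPhi_left : starPhi a b u v huv a = Sum.inl u :=
  dif_pos rfl

theorem starPhi_right (hab : a ≠ b) : starPhi a b u v huv b = Sum.inl v :=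
  (dif_neg hab.symm).trans (dif_pos rfl)

theorem starPhi_of_ne {x : V} (hxa : x ≠ a) (hxb : x ≠ b) :
    starPhi a b u v huv x = Sum.inr (⟨(u, v), huv⟩, ⟨x, hxa, hxb⟩) :=
  (dif_neg hxa).trans (dif_neg hxb)

theorem starPhi_eq_inl {x : V} {w : D} (h : starPhi a b u v huv x = Sum.inl w) :
    (x = a ∧ w = u) ∨ (x = b ∧ w = v) := by
  by_cases hxa : x = a
  · subst hxa
    exact Or.inl ⟨rfl, (Sum.inl.inj (starPhi_left.symm.trans h)).symm⟩
  by_cases hxb : x = b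
  · subst hxb
    exact Or.inr ⟨rfl, (Sum.inl.inj ((starPhi_right (Ne.symm hxa)).symm.trans h)).symm⟩
  · exact (Sum.inr_ne_inl ((starPhi_of_ne hxa hxb).symm.trans h)).elim

theorem starPhi_eq_inr {x : V} {q} (h : starPhi a b u v huv x = Sum.inr q) :
    q.1 = ⟨(u, v), huv⟩ ∧ q.2.val = x := by
  by_cases hxa : x = a
  · subst hxa
    exact (Sum.inl_ne_inr (starPhi_left.symm.trans h)).elim
  by_cases hxb : x = b
  · subst hxb
    exact (Sum.inl_ne_inr ((starPhi_right (Ne.symm hxa)).symm.trans h)).elim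
  · obtain rfl := Sum.inr.inj ((starPhi_of_ne hxa hxb).symm.trans h)
    exact ⟨rfl, rfl⟩

theorem starGraph_adj_inl_inr {H : SimpleGraph V} {w : D} {e : {p : D × D // E p.1 p.2}}
    {y : {x : V // x ≠ a ∧ x ≠ b}}
    (h : (starGraph H a b D E).Adj (Sum.inl w) (Sum.inr (e, y))) :
    (H.Adj a y ∧ w = e.1.1) ∨ (H.Adj b y ∧ w = e.1.2) := by
  have key : ∀ u v (huv : E u v) s t, H.Adj s t → starPhi a b u v huv s = Sum.inl w →
      starPhi a b u v huv t = Sum.inr (e, y) →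
      (H.Adj a y ∧ w = e.1.1) ∨ (H.Adj b y ∧ w = e.1.2) := by
    intro u v huv s t hst hs ht
    obtain ⟨rfl, rfl⟩ := starPhi_eq_inr ht
    rcases starPhi_eq_inl hs with ⟨rfl, rfl⟩ | ⟨rfl, rfl⟩
    · exact Or.inl ⟨hst, rfl⟩
    · exact Or.inr ⟨hst, rfl⟩
  rcases h.2 with ⟨u, v, huv, s, t, hst, hs, ht⟩ | ⟨u, v, huv, s, t, hst, hs, ht⟩
  · exact key u v huv s t hst hs ht
  · exact key u v huv t s hst.symm ht hs

theorem starGraph_adj_inr_inr {H : SimpleGraph V} {e e' : {p : D × D // E p.1 p.2}}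
    {x y : {x : V // x ≠ a ∧ x ≠ b}}
    (h : (starGraph H a b D E).Adj (Sum.inr (e, x)) (Sum.inr (e', y))) : e = e' := by
  rcases h.2 with ⟨u, v, huv, s, t, -, hs, ht⟩ | ⟨u, v, huv, s, t, -, hs, ht⟩
  · exact (starPhi_eq_inr hs).1.trans (starPhi_eq_inr ht).1.symm
  · exact (starPhi_eq_inr ht).1.trans (starPhi_eq_inr hs).1.symm

variable {W : Type*} {f : V → W}

theorem exists_eq_inl_of_starMap_eq (hf : ∀ y, y ≠ a → y ≠ b → f y ≠ f a)
    {z : starVert V a b D E} (hz : starMap f a b z = f a) : ∃ w, z = Sum.inl w := by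
  rcases z with w | ⟨e, y, hya, hyb⟩
  · exact ⟨w, rfl⟩
  · exact absurd hz (hf y hya hyb)

theorem exists_eq_inr_of_starMap_eq (hf : Set.InjOn f {y | y ≠ a ∧ y ≠ b}) {x : V}
    (hxa : x ≠ a) (hxb : x ≠ b) (hfx : f x ≠ f a) {z : starVert V a b D E}
    (hz : starMap f a b z = f x) : ∃ e, z = Sum.inr (e, ⟨x, hxa, hxb⟩) := by
  rcases z with w | ⟨e, y, hya, hyb⟩
  · exact absurd hz.symm hfx
  · obtain rfl : y = x := hf ⟨hya, hyb⟩ ⟨hxa, hxb⟩ hz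
    exact ⟨e, rfl⟩

end StarGraph

theorem stmt10_general (D : Type*) (E : D → D → Prop)
    (χ : pathGraph 4 →g starGraph (pathGraph 4) (0 : Fin 4) 3 D E)
    (hχ : ∀ x : Fin 4,
      starMap (![0, 1, 2, 0] : Fin 4 → Fin 3) 0 3 (χ x) = ![0, 1, 2, 0] x) :
    ∃ (u v : D) (huv : E u v), ∀ x : Fin 4, χ x = starPhi 0 3 u v huv x := by
  have hf : ∀ y : Fin 4, y ≠ 0 → y ≠ 3 → (![0, 1, 2, 0] : Fin 4 → Fin 3) y ≠ 0 := by decide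
  have hinj : Set.InjOn (![0, 1, 2, 0] : Fin 4 → Fin 3) {y | y ≠ 0 ∧ y ≠ 3} := by
    intro x hx y hy; revert x y; decide
  have adj : ∀ x y : Fin 4, x.val + 1 = y.val → (starGraph _ _ _ D E).Adj (χ x) (χ y) :=
    fun _ _ h => χ.map_adj (pathGraph_adj.2 (Or.inl h))
  obtain ⟨w₀, h₀⟩ := exists_eq_inl_of_starMap_eq hf (hχ 0)
  obtain ⟨w₃, h₃⟩ := exists_eq_inl_of_starMap_eq hf (hχ 3)
  obtain ⟨e, h₁⟩ := exists_eq_inr_of_starMap_eq hinj (by decide) (by decide) (by decide) (hχ 1)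
  obtain ⟨e', h₂⟩ := exists_eq_inr_of_starMap_eq hinj (by decide) (by decide) (by decide) (hχ 2)
  have a₀₁ := adj 0 1 rfl
  have a₁₂ := adj 1 2 rfl
  have a₃₂ := (adj 2 3 rfl).symm
  rw [h₀, h₁] at a₀₁
  rw [h₁, h₂] at a₁₂
  rw [h₃, h₂] at a₃₂
  obtain rfl : e = e' := starGraph_adj_inr_inr a₁₂
  obtain rfl : w₀ = e.1.1 :=
    ((starGraph_adj_inl_inr a₀₁).resolve_right (by simp [pathGraph_adj])).2
  obtain rfl : w₃ = e.1.2 :=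
    ((starGraph_adj_inl_inr a₃₂).resolve_left (by simp [pathGraph_adj])).2
  refine ⟨_, _, e.2, fun x => ?_⟩
  fin_cases x
  · exact h₀.trans (starPhi_left (b := (3 : Fin 4))).symm
  · exact h₁.trans (starPhi_of_ne (by decide) (by decide)).symm
  · exact h₂.trans (starPhi_of_ne (by decide) (by decide)).symm
  · exact h₃.trans (starPhi_right (a := (0 : Fin 4)) (by decide)).symm

/-- Let `C₃` be the triangle with vertices `{0,1,2}`, `P₃ = pathGraph 4` the path with
vertices `a,b,c,d = 0,1,2,3` and edges `a–b, b–c, c–d`, and `f : P₃ → C₃` the graph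
homomorphism `f = ![0,1,2,0]` (so `f a = 0, f b = 1, f c = 2, f d = 0`). Then for every
digraph `(D, E)` without isolated points, every graph homomorphism
`χ : P₃ → D ⋆ (P₃, a, d)` with `f_D ∘ χ = f` equals `φ_{(u,v)}` for some edge
`(u, v) ∈ E(D)`. -/
theorem stmt10 (D : Type*) (E : D → D → Prop)
    (hD : ∀ d : D, ∃ d', E d d' ∨ E d' d)
    (χ : pathGraph 4 →g starGraph (pathGraph 4) (0 : Fin 4) 3 D E)
    (hχ : ∀ x : Fin 4,
      starMap (![0, 1, 2, 0] : Fin 4 → Fin 3) 0 3 (χ x) = ![0, 1, 2, 0] x) :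
    ∃ (u v : D) (huv : E u v), ∀ x : Fin 4, χ x = starPhi 0 3 u v huv x :=
  stmt10_general D E χ hχ
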